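/- arXiv:1611.06038 — 5 statements merged into one kernel-verified Lean document; each statement's English description precedes it below -/
import Mathlib

section
/- In any execution of the algorithm MaxMatch, for each matched vertex u, there are at most two transitions of the execution in which u executes a rule whose command writes the value True into end_u. -/
open Classical

section MaxMatchPreamble

variable {V : Type*} [Fintype V] [LinearOrder V]

/-- Strict comparison on identifiers where `none` (null) counts as greater
than every identifier. -/
def optLT : Option V → Option V → Prop
  | some x, some y => x < y
  | some _, none => True
  | none, _ => False

/-- A configuration of the MaxMatch algorithm: the variables `p`, `α`, `β`
(`a`,`b` here) and the booleans `s`, `end` (`e` here) of every vertex. -/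
structure MMConfig (V : Type*) where
  p : V → Option V
  a : V → Option V
  b : V → Option V
  s : V → Bool
  e : V → Bool

/-- The local state of one vertex. -/
structure MMLocal (V : Type*) where
  p : Option V
  a : Option V
  b : Option V
  s : Bool
  e : Bool

/-- The local state of vertex `u` in configuration `C`. -/
def MMConfig.loc (C : MMConfig V) (u : V) : MMLocal V :=
  ⟨C.p u, C.a u, C.b u, C.s u, C.e u⟩

/-- `m` encodes a maximal matching of `G`: `m u = some v` iff `(u,v)` is a
matching edge, `m u = none` iff `u` is single. -/
structure MaxMatchingOn (G : SimpleGraph V) (m : V → Option V) : Prop where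
  adj : ∀ u v, m u = some v → G.Adj u v
  symm : ∀ u v, m u = some v → m v = some u
  maximal : ∀ u v, G.Adj u v → m u ≠ none ∨ m v ≠ none

/-- `Lowest(S)`: the minimum-identifier element of `S`, `none` if `S = ∅`. -/
noncomputable def lowestSet (S : Set V) : Option V :=
  if h : (Finset.univ.filter fun x => x ∈ S).Nonempty
  then some ((Finset.univ.filter fun x => x ∈ S).min' h) else none

/-- `Lowest` of a finite set of identifiers-or-null: `none` (null) elements are
greater than all identifiers, hence ignored. -/
noncomputable def lowestOpt (S : Finset (Option V)) : Option V :=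
  lowestSet {x : V | some x ∈ S}

/-- Truth value of a proposition. -/
noncomputable def pb (P : Prop) : Bool := if P then true else false

variable (G : SimpleGraph V) (m : V → Option V)

/-- The candidate set considered by `BestRematch(u)`. -/
def candSet (C : MMConfig V) (u : V) : Set V :=
  {x | G.Adj u x ∧ m x = none ∧ (C.p x = some u ∨ C.e x = false)}

/-- `BestRematch(u)`. -/
noncomputable def bestRematch (C : MMConfig V) (u : V) : Option V × Option V :=
  let a := lowestSet (candSet G m C u)
  (a, a.elim none fun w => lowestSet (candSet G m C u \ {w}))

/-- `AskFirst(u)`. -/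
noncomputable def askFirst (C : MMConfig V) (u : V) : Option V :=
  match m u with
  | none => none
  | some v =>
      if C.a u ≠ none ∧ C.a v ≠ none ∧
         2 ≤ ({C.a u, C.b u, C.a v, C.b v} : Finset (Option V)).card ∧
         (optLT (C.a u) (C.a v) ∨ (C.a u = C.a v ∧ C.b u = none) ∨
          (C.a u = C.a v ∧ C.b v ≠ none ∧ u < v))
      then C.a u else none

/-- `AskSecond(u)`. -/
noncomputable def askSecond (C : MMConfig V) (u : V) : Option V :=
  match m u with
  | none => none
  | some v =>
      if askFirst m C v ≠ none
      then lowestOpt (({C.a u, C.b u} : Finset (Option V)) \ {C.a v})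
      else none

/-- `Ask(u)`. -/
noncomputable def ask (C : MMConfig V) (u : V) : Option V :=
  if askFirst m C u = none then askSecond m C u else askFirst m C u

/-- Guard of rule `ResetEnd` (single vertices). -/
def guardResetEnd (C : MMConfig V) (x : V) : Prop :=
  C.p x = none ∧ C.e x = true

/-- Guard of rule `UpdateP` (single vertices). -/
def guardUpdateP (C : MMConfig V) (x : V) : Prop :=
  (C.p x = none ∧ ∃ w, G.Adj x w ∧ m w ≠ none ∧ C.p w = some x) ∨
  (∃ w, C.p x = some w ∧ ¬ (G.Adj x w ∧ m w ≠ none)) ∨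
  (∃ w, C.p x = some w ∧ C.p w ≠ some x)

/-- Guard of rule `UpdateEnd` (single vertices). -/
def guardUpdateEnd (C : MMConfig V) (x : V) : Prop :=
  ∃ w, C.p x = some w ∧ G.Adj x w ∧ m w ≠ none ∧ C.p w = some x ∧ C.e x ≠ C.e w

/-- `o ∈ single(N(u)) ∪ {null}`. -/
def inSNopt (u : V) (o : Option V) : Prop :=
  o = none ∨ ∃ w, o = some w ∧ G.Adj u w ∧ m w = none

/-- First part (first four disjuncts) of the guard of rule `Update`. -/
def guardUpdateA (C : MMConfig V) (u : V) : Prop :=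
  optLT (C.b u) (C.a u) ∨
  (¬ inSNopt G m u (C.a u) ∨ ¬ inSNopt G m u (C.b u)) ∨
  (C.a u = C.b u ∧ C.a u ≠ none) ∨
  ¬ inSNopt G m u (C.p u)

/-- Guard of rule `Update` (matched vertices). -/
def guardUpdate (C : MMConfig V) (u : V) : Prop :=
  guardUpdateA G m C u ∨
  ((C.a u, C.b u) ≠ bestRematch G m C u ∧
    (C.p u = none ∨ ∃ w, C.p u = some w ∧ C.p w ≠ some u ∧ C.e w = true))

/-- `p_{p_u} = u`. -/
def ppEq (C : MMConfig V) (u : V) : Prop :=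
  ∃ w, C.p u = some w ∧ C.p w = some u

/-- Value assigned to `s_u` by `MatchFirst` (`v = m_u`). -/
def mfS (C : MMConfig V) (u v : V) : Prop :=
  C.p u = askFirst m C u ∧ ppEq C u ∧ (C.p v = askSecond m C v ∨ C.p v = none)

/-- Value assigned to `end_u` by `MatchFirst` (`v = m_u`). -/
def mfE (C : MMConfig V) (u v : V) : Prop :=
  C.p u = askFirst m C u ∧ ppEq C u ∧ C.s u = true ∧
  C.p v = askSecond m C v ∧ C.e v = true

/-- Guard of rule `MatchFirst` (matched vertices). -/
def guardMatchFirst (C : MMConfig V) (u : V) : Prop :=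
  askFirst m C u ≠ none ∧ ∃ v, m u = some v ∧
    (C.p u ≠ askFirst m C u ∨ ¬ (C.s u = true ↔ mfS m C u v) ∨
     ¬ (C.e u = true ↔ mfE m C u v))

/-- Value assigned to `end_u` (and then `s_u`) by `MatchSecond` (`v = m_u`). -/
def msE (C : MMConfig V) (u v : V) : Prop :=
  C.p u = askSecond m C u ∧ ppEq C u ∧ C.p v = askFirst m C v

/-- Guard of rule `MatchSecond` (matched vertices). -/
def guardMatchSecond (C : MMConfig V) (u : V) : Prop :=
  askSecond m C u ≠ none ∧ ∃ v, m u = some v ∧ C.s v = true ∧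
    (C.p u ≠ askSecond m C u ∨ ¬ (C.e u = true ↔ msE m C u v) ∨ C.s u ≠ C.e u)

/-- Guard of rule `ResetMatch` (matched vertices). -/
def guardResetMatch (C : MMConfig V) (u : V) : Prop :=
  (askFirst m C u = none ∧ askSecond m C u = none ∧
    ¬ (C.p u = none ∧ C.s u = false ∧ C.e u = false)) ∨
  (askSecond m C u ≠ none ∧ C.p u ≠ none ∧ ∃ v, m u = some v ∧ C.s v = false)

/-- The local state of `u` after it atomically executes the command of its
highest-priority true-guard rule (its state is unchanged if no guard holds). -/
noncomputable def localNext (C : MMConfig V) (u : V) : MMLocal V :=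
  if m u = none then
    if guardResetEnd C u then ⟨C.p u, C.a u, C.b u, C.s u, false⟩
    else if guardUpdateP G m C u then
      ⟨lowestSet {w | G.Adj u w ∧ C.p w = some u}, C.a u, C.b u, C.s u, false⟩
    else if guardUpdateEnd G m C u then
      ⟨C.p u, C.a u, C.b u, C.s u, (C.p u).elim (C.e u) C.e⟩
    else C.loc u
  else
    if guardUpdate G m C u then
      ⟨none, (bestRematch G m C u).1, (bestRematch G m C u).2, false, false⟩
    else if guardMatchFirst m C u then
      ⟨askFirst m C u, C.a u, C.b u,
        pb (∃ v, m u = some v ∧ mfS m C u v),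
        pb (∃ v, m u = some v ∧ mfE m C u v)⟩
    else if guardMatchSecond m C u then
      ⟨askSecond m C u, C.a u, C.b u,
        pb (∃ v, m u = some v ∧ msE m C u v),
        pb (∃ v, m u = some v ∧ msE m C u v)⟩
    else if guardResetMatch m C u then ⟨none, C.a u, C.b u, false, false⟩
    else C.loc u

/-- `u` is activable (eligible for some rule) in `C`. -/
def Activable (C : MMConfig V) (u : V) : Prop :=
  (m u = none ∧ (guardResetEnd C u ∨ guardUpdateP G m C u ∨ guardUpdateEnd G m C u)) ∨
  (m u ≠ none ∧ (guardUpdate G m C u ∨ guardMatchFirst m C u ∨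
    guardMatchSecond m C u ∨ guardResetMatch m C u))

/-- A configuration is stable when no vertex is activable. -/
def Stable (C : MMConfig V) : Prop := ∀ u, ¬ Activable G m C u

/-- One transition of the adversarial distributed daemon: the nonempty set `A`
of activable vertices simultaneously execute their (highest-priority) rules. -/
def StepOn (C C' : MMConfig V) (A : Set V) : Prop :=
  A.Nonempty ∧ (∀ u ∈ A, Activable G m C u) ∧
  (∀ u ∈ A, C'.loc u = localNext G m C u) ∧
  (∀ u, u ∉ A → C'.loc u = C.loc u)

/-- A (maximal) execution, padded with stuttering once a stable configuration is
reached: at each index either a genuine transition occurs, or the configuration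
is stable and nothing moves.  `u ∈ act i` means `u` makes a move in transition
`i ↦ i+1`. -/
structure MMExecution (G : SimpleGraph V) (m : V → Option V) where
  cfg : ℕ → MMConfig V
  act : ℕ → Set V
  valid : ∀ i, StepOn G m (cfg i) (cfg (i+1)) (act i) ∨
    (act i = ∅ ∧ Stable G m (cfg i) ∧ cfg (i+1) = cfg i)

/-- μ: the number of matched vertices. -/
noncomputable def muV : ℕ := (Finset.univ.filter fun u : V => m u ≠ none).card

/-- σ: the number of single vertices. -/
noncomputable def sigmaV : ℕ := (Finset.univ.filter fun u : V => m u = none).card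

/-- The matching `M` as a relation. -/
def Mrel (a b : V) : Prop := m a = some b

/-- The output edge set `M⁺` of a configuration, as a relation. -/
def Mplus (C : MMConfig V) (a b : V) : Prop :=
  (m a = some b ∧ C.p a = none ∧ C.p b = none) ∨
  (G.Adj a b ∧ m a ≠ some b ∧ C.p a = some b ∧ C.p b = some a)

/-- `(x,u,v,y)` is a 3-augmenting path on `(G, M')`. -/
def IsAug3 (M' : V → V → Prop) (x u v y : V) : Prop :=
  x ≠ u ∧ x ≠ v ∧ x ≠ y ∧ u ≠ v ∧ u ≠ y ∧ v ≠ y ∧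
  G.Adj x u ∧ G.Adj u v ∧ G.Adj v y ∧
  M' u v ∧ ¬ M' x u ∧ ¬ M' v y

end MaxMatchPreamble
section Aux
set_option linter.unusedSectionVars false

open Classical

variable {V : Type*} [Fintype V] [LinearOrder V] {G : SimpleGraph V} {m : V → Option V}

lemma pb_true {P : Prop} : pb P = true ↔ P := by simp [pb]

lemma loc_eq_iff {C : MMConfig V} {u : V} {l : MMLocal V} :
    C.loc u = l ↔ C.p u = l.p ∧ C.a u = l.a ∧ C.b u = l.b ∧ C.s u = l.s ∧ C.e u = l.e := by
  cases l; simp [MMConfig.loc, MMLocal.mk.injEq]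

lemma lowestSet_none {S : Set V} (h : ∀ x : V, x ∉ S) : lowestSet S = none := by
  unfold lowestSet
  rw [dif_neg]
  rintro ⟨x, hx⟩
  rw [Finset.mem_filter] at hx
  exact h x hx.2

lemma askFirst_some {C : MMConfig V} {u v : V} (hmu : m u = some v) :
    askFirst m C u =
      if C.a u ≠ none ∧ C.a v ≠ none ∧
         2 ≤ ({C.a u, C.b u, C.a v, C.b v} : Finset (Option V)).card ∧
         (optLT (C.a u) (C.a v) ∨ (C.a u = C.a v ∧ C.b u = none) ∨
          (C.a u = C.a v ∧ C.b v ≠ none ∧ u < v))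
      then C.a u else none := by
  unfold askFirst; rw [hmu]

lemma askSecond_some {C : MMConfig V} {u v : V} (hmu : m u = some v) :
    askSecond m C u =
      if askFirst m C v ≠ none
      then lowestOpt (({C.a u, C.b u} : Finset (Option V)) \ {C.a v})
      else none := by
  unfold askSecond; rw [hmu]

lemma askFirst_congr {C C' : MMConfig V} {u v : V} (hmu : m u = some v)
    (h1 : C'.a u = C.a u) (h2 : C'.b u = C.b u) (h3 : C'.a v = C.a v) (h4 : C'.b v = C.b v) :
    askFirst m C' u = askFirst m C u := by
  rw [askFirst_some hmu, askFirst_some hmu, h1, h2, h3, h4]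

lemma askSecond_congr {C C' : MMConfig V} {u v : V} (hmu : m u = some v) (hvu : m v = some u)
    (h1 : C'.a u = C.a u) (h2 : C'.b u = C.b u) (h3 : C'.a v = C.a v) (h4 : C'.b v = C.b v) :
    askSecond m C' u = askSecond m C u := by
  rw [askSecond_some hmu, askSecond_some hmu, h1, h2, h3,
    askFirst_congr hvu h3 h4 h1 h2]

lemma guardUpdateA_congr {C C' : MMConfig V} {u : V}
    (h1 : C'.a u = C.a u) (h2 : C'.b u = C.b u) (h3 : C'.p u = C.p u) :
    guardUpdateA G m C' u ↔ guardUpdateA G m C u := by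
  unfold guardUpdateA; rw [h1, h2, h3]

/-- Exclusivity: a vertex cannot be simultaneously First and Second. -/
lemma askFirst_askSecond {C : MMConfig V} {u v : V} (hmu : m u = some v) (hvu : m v = some u)
    (hF : askFirst m C u ≠ none) : askSecond m C u = none := by
  rw [askSecond_some hmu]
  by_cases hFv : askFirst m C v = none
  · rw [if_neg (by simpa using hFv)]
  · have hFv2 := hFv
    rw [askFirst_some hmu] at hF
    rw [askFirst_some hvu] at hFv2
    by_cases Hu : C.a u ≠ none ∧ C.a v ≠ none ∧
         2 ≤ ({C.a u, C.b u, C.a v, C.b v} : Finset (Option V)).card ∧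
         (optLT (C.a u) (C.a v) ∨ (C.a u = C.a v ∧ C.b u = none) ∨
          (C.a u = C.a v ∧ C.b v ≠ none ∧ u < v))
    swap
    · rw [if_neg Hu] at hF; exact absurd rfl hF
    by_cases Hv : C.a v ≠ none ∧ C.a u ≠ none ∧
         2 ≤ ({C.a v, C.b v, C.a u, C.b u} : Finset (Option V)).card ∧
         (optLT (C.a v) (C.a u) ∨ (C.a v = C.a u ∧ C.b v = none) ∨
          (C.a v = C.a u ∧ C.b u ≠ none ∧ v < u))
    swap
    · rw [if_neg Hv] at hFv2; exact absurd rfl hFv2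
    -- derive a u = a v, b u = none, b v = none
    obtain ⟨hau, hav, -, hdu⟩ := Hu
    obtain ⟨-, -, -, hdv⟩ := Hv
    obtain ⟨p, hp⟩ := Option.ne_none_iff_exists'.mp hau
    obtain ⟨q, hq⟩ := Option.ne_none_iff_exists'.mp hav
    have hlt1 : optLT (C.a u) (C.a v) → p < q := fun h => by rw [hp, hq] at h; exact h
    have hlt2 : optLT (C.a v) (C.a u) → q < p := fun h => by rw [hp, hq] at h; exact h
    have heq1 : C.a u = C.a v → p = q := fun h => by
      rw [hp, hq] at h; exact Option.some.inj h
    have heq : C.a u = C.a v ∧ C.b u = none ∧ C.b v = none := by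
      rcases hdu with h | ⟨he, hb⟩ | ⟨he, hbv, huv⟩ <;>
        rcases hdv with h' | ⟨he', hb'⟩ | ⟨he', hbu', hvu'⟩
      · exact absurd (hlt2 h') (not_lt_of_gt (hlt1 h))
      · exact absurd (heq1 he'.symm) (ne_of_lt (hlt1 h))
      · exact absurd (heq1 he'.symm) (ne_of_lt (hlt1 h))
      · exact absurd (heq1 he) (ne_of_gt (hlt2 h'))
      · exact ⟨he, hb, hb'⟩
      · exact absurd hb hbu'
      · exact absurd (heq1 he) (ne_of_gt (hlt2 h'))
      · exact absurd hb' hbv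
      · exact absurd hvu' (not_lt_of_gt huv)
    obtain ⟨he, hbu, hbv⟩ := heq
    rw [if_pos hFv]
    apply lowestSet_none
    intro x hx
    simp only [Set.mem_setOf_eq, Finset.mem_sdiff, Finset.mem_insert,
      Finset.mem_singleton, hbu, ← he] at hx
    rcases hx with ⟨h1 | h1, h2⟩
    · exact h2 h1
    · exact nomatch h1

end Aux
section Aux2
set_option linter.unusedSectionVars false
open Classical

variable {V : Type*} [Fintype V] [LinearOrder V] {G : SimpleGraph V} {m : V → Option V}

lemma locp {C C' : MMConfig V} {w : V} (h : C'.loc w = C.loc w) : C'.p w = C.p w :=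
  congrArg MMLocal.p h
lemma loca {C C' : MMConfig V} {w : V} (h : C'.loc w = C.loc w) : C'.a w = C.a w :=
  congrArg MMLocal.a h
lemma locb {C C' : MMConfig V} {w : V} (h : C'.loc w = C.loc w) : C'.b w = C.b w :=
  congrArg MMLocal.b h
lemma locs {C C' : MMConfig V} {w : V} (h : C'.loc w = C.loc w) : C'.s w = C.s w :=
  congrArg MMLocal.s h
lemma loce {C C' : MMConfig V} {w : V} (h : C'.loc w = C.loc w) : C'.e w = C.e w :=
  congrArg MMLocal.e h

variable {E : MMExecution G m}

lemma act_loc {i : ℕ} {w : V} (hw : w ∈ E.act i) :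
    Activable G m (E.cfg i) w ∧ (E.cfg (i+1)).loc w = localNext G m (E.cfg i) w := by
  rcases E.valid i with ⟨-, h2, h3, -⟩ | ⟨hemp, -, -⟩
  · exact ⟨h2 w hw, h3 w hw⟩
  · rw [hemp] at hw; exact absurd hw (Set.notMem_empty w)

lemma noact_loc {i : ℕ} {w : V} (hw : w ∉ E.act i) :
    (E.cfg (i+1)).loc w = (E.cfg i).loc w := by
  rcases E.valid i with ⟨-, -, -, h4⟩ | ⟨-, -, h4⟩
  · exact h4 w hw
  · rw [h4]

variable {C : MMConfig V}

lemma localNext_U {w : V} (hmw : m w ≠ none) (h : guardUpdate G m C w) :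
    localNext G m C w =
      ⟨none, (bestRematch G m C w).1, (bestRematch G m C w).2, false, false⟩ := by
  unfold localNext; rw [if_neg hmw, if_pos h]

lemma localNext_MF {w : V} (hmw : m w ≠ none) (h1 : ¬ guardUpdate G m C w)
    (h2 : guardMatchFirst m C w) :
    localNext G m C w = ⟨askFirst m C w, C.a w, C.b w,
      pb (∃ v, m w = some v ∧ mfS m C w v), pb (∃ v, m w = some v ∧ mfE m C w v)⟩ := by
  unfold localNext; rw [if_neg hmw, if_neg h1, if_pos h2]

lemma localNext_MS {w : V} (hmw : m w ≠ none) (h1 : ¬ guardUpdate G m C w)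
    (h2 : ¬ guardMatchFirst m C w) (h3 : guardMatchSecond m C w) :
    localNext G m C w = ⟨askSecond m C w, C.a w, C.b w,
      pb (∃ v, m w = some v ∧ msE m C w v), pb (∃ v, m w = some v ∧ msE m C w v)⟩ := by
  unfold localNext; rw [if_neg hmw, if_neg h1, if_neg h2, if_pos h3]

lemma localNext_RM {w : V} (hmw : m w ≠ none) (h1 : ¬ guardUpdate G m C w)
    (h2 : ¬ guardMatchFirst m C w) (h3 : ¬ guardMatchSecond m C w)
    (h4 : guardResetMatch m C w) :
    localNext G m C w = ⟨none, C.a w, C.b w, false, false⟩ := by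
  unfold localNext; rw [if_neg hmw, if_neg h1, if_neg h2, if_neg h3, if_pos h4]

lemma localNext_id {w : V} (hmw : m w ≠ none) (h1 : ¬ guardUpdate G m C w)
    (h2 : ¬ guardMatchFirst m C w) (h3 : ¬ guardMatchSecond m C w)
    (h4 : ¬ guardResetMatch m C w) :
    localNext G m C w = C.loc w := by
  unfold localNext; rw [if_neg hmw, if_neg h1, if_neg h2, if_neg h3, if_neg h4]

lemma not_gUA_of_not_gU {w : V} (h : ¬ guardUpdate G m C w) : ¬ guardUpdateA G m C w :=
  fun h' => h (Or.inl h')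

lemma adj_single_of_p {w y : V} (h : ¬ guardUpdateA G m C w) (hp : C.p w = some y) :
    G.Adj w y ∧ m y = none := by
  have h4 : inSNopt G m w (C.p w) := by
    unfold guardUpdateA at h
    push_neg at h
    exact h.2.2.2
  rcases h4 with h4 | ⟨w', hw', ha, hs⟩
  · rw [hp] at h4; exact nomatch h4
  · rw [hp] at hw'; cases Option.some.inj hw'; exact ⟨ha, hs⟩

/-- A single vertex keeps its pointer while its matched partner points at it. -/
lemma single_frozen {i : ℕ} {x w : V} (hx : m x = none) (hadj : G.Adj x w)
    (hmw : m w ≠ none) (hpx : (E.cfg i).p x = some w) (hpw : (E.cfg i).p w = some x) :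
    (E.cfg (i+1)).p x = some w := by
  by_cases hin : x ∈ E.act i
  · have h2 := (act_loc hin).2
    have hres : (localNext G m (E.cfg i) x).p = (E.cfg i).p x := by
      unfold localNext
      rw [if_pos hx, if_neg (fun h : guardResetEnd (E.cfg i) x => by
        rw [h.1] at hpx; exact nomatch hpx)]
      rw [if_neg (fun h : guardUpdateP G m (E.cfg i) x => by
        rcases h with ⟨h1, -⟩ | ⟨w', hw', hno⟩ | ⟨w', hw', hne⟩
        · rw [h1] at hpx; exact nomatch hpx
        · rw [hpx] at hw'; cases Option.some.inj hw'; exact hno ⟨hadj, hmw⟩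
        · rw [hpx] at hw'; cases Option.some.inj hw'; exact hne hpw)]
      by_cases h3 : guardUpdateEnd G m (E.cfg i) x
      · rw [if_pos h3]
      · rw [if_neg h3]; rfl
    calc (E.cfg (i+1)).p x = (localNext G m (E.cfg i) x).p := congrArg MMLocal.p h2
    _ = (E.cfg i).p x := hres
    _ = some w := hpx
  · exact (locp (noact_loc hin)).trans hpx

lemma mfE_imp_mfS {w v : V} (h : mfE m C w v) : mfS m C w v :=
  ⟨h.1, h.2.1, Or.inl h.2.2.2.1⟩

/-- Case analysis for a move by a matched vertex that results in `e = true`. -/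
lemma true_write_cases {i : ℕ} {w v : V} (hmw : m w = some v) (hw : w ∈ E.act i)
    (he : (E.cfg (i+1)).e w = true) :
    (¬ guardUpdate G m (E.cfg i) w ∧ guardMatchFirst m (E.cfg i) w ∧
      mfE m (E.cfg i) w v ∧
      (E.cfg (i+1)).loc w =
        ⟨askFirst m (E.cfg i) w, (E.cfg i).a w, (E.cfg i).b w, true, true⟩) ∨
    (¬ guardUpdate G m (E.cfg i) w ∧ ¬ guardMatchFirst m (E.cfg i) w ∧
      guardMatchSecond m (E.cfg i) w ∧ msE m (E.cfg i) w v ∧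
      (E.cfg (i+1)).loc w =
        ⟨askSecond m (E.cfg i) w, (E.cfg i).a w, (E.cfg i).b w, true, true⟩) := by
  obtain ⟨hact, hloc⟩ := act_loc hw
  have hne : m w ≠ none := by rw [hmw]; exact Option.some_ne_none _
  by_cases h1 : guardUpdate G m (E.cfg i) w
  · rw [localNext_U hne h1] at hloc
    rw [loc_eq_iff] at hloc
    rw [hloc.2.2.2.2] at he; exact absurd he (by simp)
  by_cases h2 : guardMatchFirst m (E.cfg i) w
  · left
    rw [localNext_MF hne h1 h2] at hloc
    have he2 : (E.cfg (i+1)).e w = pb (∃ v, m w = some v ∧ mfE m (E.cfg i) w v) :=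
      (loc_eq_iff.mp hloc).2.2.2.2
    have he' : pb (∃ v, m w = some v ∧ mfE m (E.cfg i) w v) = true := he2.symm.trans he
    obtain ⟨v', hv', hmfE⟩ := pb_true.mp he'
    rw [hmw] at hv'
    cases Option.some.inj hv'
    have hs' : pb (∃ v, m w = some v ∧ mfS m (E.cfg i) w v) = true :=
      pb_true.mpr ⟨v, hmw, mfE_imp_mfS hmfE⟩
    refine ⟨h1, h2, hmfE, ?_⟩
    rw [hloc, hs', he']
  by_cases h3 : guardMatchSecond m (E.cfg i) w
  · right
    rw [localNext_MS hne h1 h2 h3] at hloc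
    have he2 : (E.cfg (i+1)).e w = pb (∃ v, m w = some v ∧ msE m (E.cfg i) w v) :=
      (loc_eq_iff.mp hloc).2.2.2.2
    have he' : pb (∃ v, m w = some v ∧ msE m (E.cfg i) w v) = true := he2.symm.trans he
    obtain ⟨v', hv', hmsE⟩ := pb_true.mp he'
    rw [hmw] at hv'
    cases Option.some.inj hv'
    refine ⟨h1, h2, h3, hmsE, ?_⟩
    rw [hloc, he']
  by_cases h4 : guardResetMatch m (E.cfg i) w
  · rw [localNext_RM hne h1 h2 h3 h4] at hloc
    rw [loc_eq_iff] at hloc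
    rw [hloc.2.2.2.2] at he; exact absurd he (by simp)
  · rcases hact with ⟨h0, -⟩ | ⟨-, hg⟩
    · exact absurd h0 hne
    · rcases hg with h | h | h | h
      · exact absurd h h1
      · exact absurd h h2
      · exact absurd h h3
      · exact absurd h h4

/-- Case analysis for a move by a matched vertex that results in `s = true`. -/
lemma s_write_cases {i : ℕ} {w v : V} (hmw : m w = some v) (hw : w ∈ E.act i)
    (hs : (E.cfg (i+1)).s w = true) :
    (¬ guardUpdate G m (E.cfg i) w ∧ guardMatchFirst m (E.cfg i) w ∧
      mfS m (E.cfg i) w v ∧ (E.cfg (i+1)).p w = askFirst m (E.cfg i) w ∧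
      (E.cfg (i+1)).a w = (E.cfg i).a w ∧ (E.cfg (i+1)).b w = (E.cfg i).b w) ∨
    (¬ guardUpdate G m (E.cfg i) w ∧ ¬ guardMatchFirst m (E.cfg i) w ∧
      guardMatchSecond m (E.cfg i) w ∧ msE m (E.cfg i) w v ∧
      (E.cfg (i+1)).p w = askSecond m (E.cfg i) w ∧
      (E.cfg (i+1)).a w = (E.cfg i).a w ∧ (E.cfg (i+1)).b w = (E.cfg i).b w) := by
  obtain ⟨hact, hloc⟩ := act_loc hw
  have hne : m w ≠ none := by rw [hmw]; exact Option.some_ne_none _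
  by_cases h1 : guardUpdate G m (E.cfg i) w
  · rw [localNext_U hne h1] at hloc
    rw [loc_eq_iff] at hloc
    rw [hloc.2.2.2.1] at hs; exact absurd hs (by simp)
  by_cases h2 : guardMatchFirst m (E.cfg i) w
  · left
    rw [localNext_MF hne h1 h2] at hloc
    rw [loc_eq_iff] at hloc
    have hs2 : (E.cfg (i+1)).s w = pb (∃ v, m w = some v ∧ mfS m (E.cfg i) w v) :=
      hloc.2.2.2.1
    obtain ⟨v', hv', hmfS⟩ := pb_true.mp (hs2.symm.trans hs)
    rw [hmw] at hv'
    cases Option.some.inj hv'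
    exact ⟨h1, h2, hmfS, hloc.1, hloc.2.1, hloc.2.2.1⟩
  by_cases h3 : guardMatchSecond m (E.cfg i) w
  · right
    rw [localNext_MS hne h1 h2 h3] at hloc
    rw [loc_eq_iff] at hloc
    have hs2 : (E.cfg (i+1)).s w = pb (∃ v, m w = some v ∧ msE m (E.cfg i) w v) :=
      hloc.2.2.2.1
    obtain ⟨v', hv', hmsE⟩ := pb_true.mp (hs2.symm.trans hs)
    rw [hmw] at hv'
    cases Option.some.inj hv'
    exact ⟨h1, h2, h3, hmsE, hloc.1, hloc.2.1, hloc.2.2.1⟩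
  by_cases h4 : guardResetMatch m (E.cfg i) w
  · rw [localNext_RM hne h1 h2 h3 h4] at hloc
    rw [loc_eq_iff] at hloc
    rw [hloc.2.2.2.1] at hs; exact absurd hs (by simp)
  · rcases hact with ⟨h0, -⟩ | ⟨-, hg⟩
    · exact absurd h0 hne
    · rcases hg with h | h | h | h
      · exact absurd h h1
      · exact absurd h h2
      · exact absurd h h3
      · exact absurd h h4

end Aux2
section Aux3
set_option linter.unusedSectionVars false
open Classical

variable {V : Type*} [Fintype V] [LinearOrder V] {G : SimpleGraph V} {m : V → Option V}
variable {C : MMConfig V}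

lemma not_gU {w y : V} (hgA : ¬ guardUpdateA G m C w) (hp : C.p w = some y)
    (hpy : C.p y = some w) : ¬ guardUpdate G m C w := by
  rintro (h | ⟨-, h | ⟨w', hw', hne, -⟩⟩)
  · exact hgA h
  · rw [hp] at h; exact nomatch h
  · rw [hp] at hw'; cases Option.some.inj hw'; exact hne hpy

lemma askF_none {u v : V} (hmu : m u = some v) (hvu : m v = some u) {y : V}
    (h5 : askSecond m C u = some y) : askFirst m C u = none := by
  by_contra h
  rw [askFirst_askSecond hmu hvu h] at h5
  exact nomatch h5

lemma askS_none {u v : V} (hmu : m u = some v) (hvu : m v = some u) {x : V}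
    (h5 : askFirst m C u = some x) : askSecond m C u = none :=
  askFirst_askSecond hmu hvu (by rw [h5]; exact Option.some_ne_none _)

lemma not_activable_second {u v : V} (hmu : m u = some v) (hvu : m v = some u) {y : V}
    (h1 : C.p u = some y) (h2 : C.p y = some u) (h3 : C.s u = true) (h4 : C.e u = true)
    (h5 : askSecond m C u = some y) (h6 : ¬ guardUpdateA G m C u)
    (h7 : C.s v = true) (h8 : C.p v = askFirst m C v) : ¬ Activable G m C u := by
  have hne : m u ≠ none := by rw [hmu]; exact Option.some_ne_none _
  rintro (⟨h0, -⟩ | ⟨-, hg⟩)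
  · exact hne h0
  rcases hg with h | h | h | h
  · exact not_gU h6 h1 h2 h
  · exact h.1 (askF_none hmu hvu h5)
  · obtain ⟨-, v', hv', -, hdis⟩ := h
    rw [hmu] at hv'; cases Option.some.inj hv'
    rcases hdis with hd | hd | hd
    · exact hd (h1.trans h5.symm)
    · exact hd ⟨fun _ => ⟨h1.trans h5.symm, ⟨y, h1, h2⟩, h8⟩, fun _ => h4⟩
    · exact hd (h3.trans h4.symm)
  · rcases h with ⟨-, hS, -⟩ | ⟨-, -, v', hv', hsv⟩
    · rw [h5] at hS; exact nomatch hS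
    · rw [hmu] at hv'; cases Option.some.inj hv'
      rw [h7] at hsv; exact Bool.noConfusion hsv

lemma not_activable_first {u v : V} (hmu : m u = some v) (hvu : m v = some u) {x : V}
    (h1 : C.p u = some x) (h2 : C.p x = some u) (h3 : C.s u = true) (h4 : C.e u = true)
    (h5 : askFirst m C u = some x) (h6 : ¬ guardUpdateA G m C u)
    (h7 : C.p v = askSecond m C v) (h8 : C.e v = true) : ¬ Activable G m C u := by
  have hne : m u ≠ none := by rw [hmu]; exact Option.some_ne_none _
  rintro (⟨h0, -⟩ | ⟨-, hg⟩)
  · exact hne h0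
  rcases hg with h | h | h | h
  · exact not_gU h6 h1 h2 h
  · obtain ⟨-, v', hv', hdis⟩ := h
    rw [hmu] at hv'; cases Option.some.inj hv'
    rcases hdis with hd | hd | hd
    · exact hd (h1.trans h5.symm)
    · exact hd ⟨fun _ => ⟨h1.trans h5.symm, ⟨x, h1, h2⟩, Or.inl h7⟩, fun _ => h3⟩
    · exact hd ⟨fun _ => ⟨h1.trans h5.symm, ⟨x, h1, h2⟩, h3, h7, h8⟩, fun _ => h4⟩
  · obtain ⟨hS, -⟩ := h
    rw [askS_none hmu hvu h5] at hS; exact hS rfl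
  · rcases h with ⟨hF, -, -⟩ | ⟨hS, -, -⟩
    · rw [h5] at hF; exact nomatch hF
    · rw [askS_none hmu hvu h5] at hS; exact hS rfl

end Aux3
section Aux4
set_option linter.unusedSectionVars false
open Classical

variable {V : Type*} [Fintype V] [LinearOrder V]

/-- Settled state of the "Second" member of a matched pair. -/
def HalfS (G : SimpleGraph V) (m : V → Option V) (C : MMConfig V) (u y : V) : Prop :=
  C.p u = some y ∧ C.p y = some u ∧ G.Adj u y ∧ m y = none ∧ C.s u = true ∧ C.e u = true ∧
  askSecond m C u = some y ∧ ¬ guardUpdateA G m C u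

/-- Settled state of the "First" member of a matched pair. -/
def HalfF (G : SimpleGraph V) (m : V → Option V) (C : MMConfig V) (v x : V) : Prop :=
  C.p v = some x ∧ C.p x = some v ∧ G.Adj v x ∧ m x = none ∧ C.s v = true ∧
  askFirst m C v = some x ∧ ¬ guardUpdateA G m C v

def PairInv (G : SimpleGraph V) (m : V → Option V) (C : MMConfig V) (u v : V) : Prop :=
  ∃ y x, HalfS G m C u y ∧ HalfF G m C v x

variable {G : SimpleGraph V} {m : V → Option V} {C : MMConfig V} {u v : V}

lemma pairInv_na2 (hmu : m u = some v) (hvu : m v = some u)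
    (h : PairInv G m C u v) : ¬ Activable G m C u := by
  obtain ⟨y, x, ⟨hpu, hpy, -, -, hsu, heu, hasku, hgAu⟩, ⟨hpv, -, -, -, hsv, haskv, -⟩⟩ := h
  exact not_activable_second hmu hvu hpu hpy hsu heu hasku hgAu hsv (hpv.trans haskv.symm)

lemma pairInv_na1 (hmu : m u = some v) (hvu : m v = some u)
    (h : PairInv G m C u v) (hev : C.e v = true) : ¬ Activable G m C v := by
  obtain ⟨y, x, ⟨hpu, -, -, -, -, heu, hasku, -⟩, ⟨hpv, hpx, -, -, hsv, haskv, hgAv⟩⟩ := h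
  exact not_activable_first hvu hmu hpv hpx hsv hev haskv hgAv (hpu.trans hasku.symm) heu

variable {E : MMExecution G m}

lemma pairInv_step (hmu : m u = some v) (hvu : m v = some u) {i : ℕ}
    (h : PairInv G m (E.cfg i) u v) :
    PairInv G m (E.cfg (i+1)) u v ∧
      ((E.cfg i).e v = true → (E.cfg (i+1)).e v = true) := by
  obtain ⟨y, x, ⟨hpu, hpy, hadjy, hmy, hsu, heu, hasku, hgAu⟩,
    ⟨hpv, hpx, hadjx, hmx, hsv, haskv, hgAv⟩⟩ := h
  have hmune : m u ≠ none := by rw [hmu]; exact Option.some_ne_none _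
  have hmvne : m v ≠ none := by rw [hvu]; exact Option.some_ne_none _
  have hnau : ¬ Activable G m (E.cfg i) u :=
    not_activable_second hmu hvu hpu hpy hsu heu hasku hgAu hsv (hpv.trans haskv.symm)
  have huact : u ∉ E.act i := fun hh => hnau (act_loc hh).1
  have hlocu := noact_loc huact
  have hvfacts : (E.cfg (i+1)).p v = some x ∧ (E.cfg (i+1)).s v = true ∧
      (E.cfg (i+1)).a v = (E.cfg i).a v ∧ (E.cfg (i+1)).b v = (E.cfg i).b v ∧
      ((E.cfg i).e v = true → (E.cfg (i+1)).e v = true) := by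
    by_cases hv : v ∈ E.act i
    · have hloc := (act_loc hv).2
      have hgUv : ¬ guardUpdate G m (E.cfg i) v := not_gU hgAv hpv hpx
      by_cases hMF : guardMatchFirst m (E.cfg i) v
      · rw [localNext_MF hmvne hgUv hMF] at hloc
        rw [loc_eq_iff] at hloc
        obtain ⟨l1, l2, l3, l4, l5⟩ := hloc
        have hmfS : mfS m (E.cfg i) v u :=
          ⟨hpv.trans haskv.symm, ⟨x, hpv, hpx⟩, Or.inl (hpu.trans hasku.symm)⟩
        have hmfE : mfE m (E.cfg i) v u :=
          ⟨hpv.trans haskv.symm, ⟨x, hpv, hpx⟩, hsv, hpu.trans hasku.symm, heu⟩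
        refine ⟨by rw [l1, haskv], ?_, l2, l3, fun _ => ?_⟩
        · have hh : (E.cfg (i+1)).s v =
              pb (∃ w, m v = some w ∧ mfS m (E.cfg i) v w) := l4
          rw [hh]; exact pb_true.mpr ⟨u, hvu, hmfS⟩
        · have hh : (E.cfg (i+1)).e v =
              pb (∃ w, m v = some w ∧ mfE m (E.cfg i) v w) := l5
          rw [hh]; exact pb_true.mpr ⟨u, hvu, hmfE⟩
      · have hMS : ¬ guardMatchSecond m (E.cfg i) v := by
          rintro ⟨hS, -⟩; rw [askS_none hvu hmu haskv] at hS; exact hS rfl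
        have hRM : ¬ guardResetMatch m (E.cfg i) v := by
          rintro (⟨hF, -, -⟩ | ⟨hS, -, -⟩)
          · rw [haskv] at hF; exact nomatch hF
          · rw [askS_none hvu hmu haskv] at hS; exact hS rfl
        rw [localNext_id hmvne hgUv hMF hMS hRM] at hloc
        exact ⟨(locp hloc).trans hpv, (locs hloc).trans hsv, loca hloc, locb hloc,
          fun hh => (loce hloc).trans hh⟩
    · have hloc := noact_loc hv
      exact ⟨(locp hloc).trans hpv, (locs hloc).trans hsv, loca hloc, locb hloc,
        fun hh => (loce hloc).trans hh⟩
  obtain ⟨hpv', hsv', hav', hbv', hev'⟩ := hvfacts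
  have hasku' : askSecond m (E.cfg (i+1)) u = some y := by
    rw [askSecond_congr hmu hvu (loca hlocu) (locb hlocu) hav' hbv']; exact hasku
  have haskv' : askFirst m (E.cfg (i+1)) v = some x := by
    rw [askFirst_congr hvu hav' hbv' (loca hlocu) (locb hlocu)]; exact haskv
  refine ⟨⟨y, x, ⟨(locp hlocu).trans hpu, ?_, hadjy, hmy, (locs hlocu).trans hsu,
    (loce hlocu).trans heu, hasku', ?_⟩, ⟨hpv', ?_, hadjx, hmx, hsv', haskv', ?_⟩⟩, hev'⟩
  · exact single_frozen hmy hadjy.symm hmune hpy hpu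
  · rw [guardUpdateA_congr (loca hlocu) (locb hlocu) (locp hlocu)]; exact hgAu
  · exact single_frozen hmx hadjx.symm hmvne hpx hpv
  · rw [guardUpdateA_congr hav' hbv' (hpv'.trans hpv.symm)]; exact hgAv

lemma pairInv_forever (hmu : m u = some v) (hvu : m v = some u) {i : ℕ}
    (h : PairInv G m (E.cfg i) u v) :
    ∀ j, i ≤ j → PairInv G m (E.cfg j) u v ∧
      ((E.cfg i).e v = true → (E.cfg j).e v = true) := by
  intro j hj
  induction j, hj using Nat.le_induction with
  | base => exact ⟨h, fun hh => hh⟩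
  | succ k hk ih =>
    obtain ⟨h1, h2⟩ := ih
    obtain ⟨h1', h2'⟩ := pairInv_step hmu hvu h1
    exact ⟨h1', fun hh => h2' (h2 hh)⟩

end Aux4
section Aux5
set_option linter.unusedSectionVars false
open Classical

variable {V : Type*} [Fintype V] [LinearOrder V] {G : SimpleGraph V} {m : V → Option V}
variable {E : MMExecution G m} {u v : V}

/-- Between a true-write of `u` and any further activity of `u`,
the partner `v` must make a move. -/
lemma partner_moves (hmu : m u = some v) (hvu : m v = some u) {t1 t2 : ℕ} (h12 : t1 < t2)
    (h1a : u ∈ E.act t1) (h1e : (E.cfg (t1+1)).e u = true) (h2a : u ∈ E.act t2) :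
    ∃ r, t1 ≤ r ∧ r < t2 ∧ v ∈ E.act r := by
  by_contra hcon
  push_neg at hcon
  have hmune : m u ≠ none := by rw [hmu]; exact Option.some_ne_none _
  have hvconst : ∀ ρ, t1 ≤ ρ → ρ ≤ t2 → (E.cfg ρ).loc v = (E.cfg t1).loc v := by
    intro ρ hρ
    induction ρ, hρ using Nat.le_induction with
    | base => intro _; rfl
    | succ k hk ih =>
      intro hk2
      have hklt : k < t2 := lt_of_lt_of_le (Nat.lt_succ_self k) hk2
      exact (noact_loc (hcon k hk hklt)).trans (ih (le_of_lt hklt))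
  rcases true_write_cases hmu h1a h1e with
    ⟨hgU, hgMF, hmfE, hloc1⟩ | ⟨hgU, hgMF, hgMS, hmsE, hloc1⟩
  -- Case 1: MatchFirst at t1
  · obtain ⟨x, hx⟩ := Option.ne_none_iff_exists'.mp hgMF.1
    have hpu1 : (E.cfg t1).p u = some x := hmfE.1.trans hx
    have hpx1 : (E.cfg t1).p x = some u := by
      obtain ⟨w, hw1, hw2⟩ := hmfE.2.1
      rw [hpu1] at hw1; cases Option.some.inj hw1; exact hw2
    have hgA := not_gUA_of_not_gU hgU
    obtain ⟨hadjx, hmx⟩ := adj_single_of_p hgA hpu1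
    have hpv1 : (E.cfg t1).p v = askSecond m (E.cfg t1) v := hmfE.2.2.2.1
    have hev1 : (E.cfg t1).e v = true := hmfE.2.2.2.2
    have hloc1' : (E.cfg (t1+1)).loc u =
        (⟨some x, (E.cfg t1).a u, (E.cfg t1).b u, true, true⟩ : MMLocal V) := by
      rw [hloc1, hx]
    have hna : ∀ ρ, t1 ≤ ρ → ρ ≤ t2 →
        (E.cfg ρ).loc u = (⟨some x, (E.cfg t1).a u, (E.cfg t1).b u, true, true⟩ : MMLocal V) →
        (E.cfg ρ).p x = some u → ¬ Activable G m (E.cfg ρ) u := by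
      intro ρ hρ1 hρ2 hQ hpxρ
      obtain ⟨q1, q2, q3, q4, q5⟩ := loc_eq_iff.mp hQ
      have hvρ := hvconst ρ hρ1 hρ2
      have haF : askFirst m (E.cfg ρ) u = some x :=
        (askFirst_congr hmu q2 q3 (loca hvρ) (locb hvρ)).trans (hmfE.1.symm.trans hpu1)
      have hpvρ : (E.cfg ρ).p v = askSecond m (E.cfg ρ) v := by
        rw [locp hvρ, askSecond_congr hvu hmu (loca hvρ) (locb hvρ) q2 q3]
        exact hpv1
      have hgAρ : ¬ guardUpdateA G m (E.cfg ρ) u := by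
        rw [guardUpdateA_congr q2 q3 (q1.trans hpu1.symm)]; exact hgA
      exact not_activable_first hmu hvu q1 hpxρ q4 q5 haF hgAρ hpvρ
        ((loce hvρ).trans hev1)
    have hQ : ∀ ρ, t1 + 1 ≤ ρ → ρ ≤ t2 →
        (E.cfg ρ).loc u = (⟨some x, (E.cfg t1).a u, (E.cfg t1).b u, true, true⟩ : MMLocal V) ∧
        (E.cfg ρ).p x = some u := by
      intro ρ hρ1
      induction ρ, hρ1 using Nat.le_induction with
      | base =>
        intro _
        exact ⟨hloc1', single_frozen hmx hadjx.symm hmune hpx1 hpu1⟩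
      | succ k hk ih =>
        intro hk2
        have hklt : k < t2 := lt_of_lt_of_le (Nat.lt_succ_self k) hk2
        obtain ⟨ql, qx⟩ := ih (le_of_lt hklt)
        have hnact : u ∉ E.act k := fun hh =>
          hna k (le_of_lt (lt_of_lt_of_le (Nat.lt_succ_self t1) hk)) (le_of_lt hklt) ql qx
            (act_loc hh).1
        refine ⟨(noact_loc hnact).trans ql, ?_⟩
        exact single_frozen hmx hadjx.symm hmune qx ((loc_eq_iff.mp ql).1)
    obtain ⟨ql, qx⟩ := hQ t2 h12 (le_refl t2)
    exact hna t2 (le_of_lt h12) (le_refl t2) ql qx (act_loc h2a).1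
  -- Case 2: MatchSecond at t1
  · obtain ⟨y, hy⟩ := Option.ne_none_iff_exists'.mp hgMS.1
    have hpu1 : (E.cfg t1).p u = some y := hmsE.1.trans hy
    have hpy1 : (E.cfg t1).p y = some u := by
      obtain ⟨w, hw1, hw2⟩ := hmsE.2.1
      rw [hpu1] at hw1; cases Option.some.inj hw1; exact hw2
    have hgA := not_gUA_of_not_gU hgU
    obtain ⟨hadjy, hmy⟩ := adj_single_of_p hgA hpu1
    have hpv1 : (E.cfg t1).p v = askFirst m (E.cfg t1) v := hmsE.2.2
    have hsv1 : (E.cfg t1).s v = true := by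
      obtain ⟨-, v', hv', hsv, -⟩ := hgMS
      rw [hmu] at hv'; cases Option.some.inj hv'; exact hsv
    have hloc1' : (E.cfg (t1+1)).loc u =
        (⟨some y, (E.cfg t1).a u, (E.cfg t1).b u, true, true⟩ : MMLocal V) := by
      rw [hloc1, hy]
    have hna : ∀ ρ, t1 ≤ ρ → ρ ≤ t2 →
        (E.cfg ρ).loc u = (⟨some y, (E.cfg t1).a u, (E.cfg t1).b u, true, true⟩ : MMLocal V) →
        (E.cfg ρ).p y = some u → ¬ Activable G m (E.cfg ρ) u := by
      intro ρ hρ1 hρ2 hQ hpyρ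
      obtain ⟨q1, q2, q3, q4, q5⟩ := loc_eq_iff.mp hQ
      have hvρ := hvconst ρ hρ1 hρ2
      have haS : askSecond m (E.cfg ρ) u = some y :=
        (askSecond_congr hmu hvu q2 q3 (loca hvρ) (locb hvρ)).trans (hmsE.1.symm.trans hpu1)
      have hpvρ : (E.cfg ρ).p v = askFirst m (E.cfg ρ) v := by
        rw [locp hvρ, askFirst_congr hvu (loca hvρ) (locb hvρ) q2 q3]
        exact hpv1
      have hgAρ : ¬ guardUpdateA G m (E.cfg ρ) u := by
        rw [guardUpdateA_congr q2 q3 (q1.trans hpu1.symm)]; exact hgA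
      exact not_activable_second hmu hvu q1 hpyρ q4 q5 haS hgAρ
        ((locs hvρ).trans hsv1) hpvρ
    have hQ : ∀ ρ, t1 + 1 ≤ ρ → ρ ≤ t2 →
        (E.cfg ρ).loc u = (⟨some y, (E.cfg t1).a u, (E.cfg t1).b u, true, true⟩ : MMLocal V) ∧
        (E.cfg ρ).p y = some u := by
      intro ρ hρ1
      induction ρ, hρ1 using Nat.le_induction with
      | base =>
        intro _
        exact ⟨hloc1', single_frozen hmy hadjy.symm hmune hpy1 hpu1⟩
      | succ k hk ih =>
        intro hk2
        have hklt : k < t2 := lt_of_lt_of_le (Nat.lt_succ_self k) hk2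
        obtain ⟨ql, qx⟩ := ih (le_of_lt hklt)
        have hnact : u ∉ E.act k := fun hh =>
          hna k (le_of_lt (lt_of_lt_of_le (Nat.lt_succ_self t1) hk)) (le_of_lt hklt) ql qx
            (act_loc hh).1
        refine ⟨(noact_loc hnact).trans ql, ?_⟩
        exact single_frozen hmy hadjy.symm hmune qx ((loc_eq_iff.mp ql).1)
    obtain ⟨ql, qx⟩ := hQ t2 h12 (le_refl t2)
    exact hna t2 (le_of_lt h12) (le_refl t2) ql qx (act_loc h2a).1

end Aux5
section Aux6
set_option linter.unusedSectionVars false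
open Classical

variable {V : Type*} [Fintype V] [LinearOrder V] {G : SimpleGraph V} {m : V → Option V}
variable {E : MMExecution G m} {w z : V}

/-- After a move of matched `w` that sets `s_w = true`, `w` is in a settled state. -/
lemma s_write_post (hmw : m w = some z) {r : ℕ} (ha : w ∈ E.act r)
    (hs : (E.cfg (r+1)).s w = true) :
    ∃ x, (E.cfg (r+1)).p w = some x ∧ (E.cfg (r+1)).p x = some w ∧ G.Adj w x ∧
      m x = none ∧ ¬ guardUpdateA G m (E.cfg (r+1)) w ∧
      (E.cfg (r+1)).a w = (E.cfg r).a w ∧ (E.cfg (r+1)).b w = (E.cfg r).b w := by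
  have hmwne : m w ≠ none := by rw [hmw]; exact Option.some_ne_none _
  rcases s_write_cases hmw ha hs with
    ⟨hgU, hgMF, hmfS, hp', haa, hbb⟩ | ⟨hgU, hgMF, hgMS, hmsE, hp', haa, hbb⟩
  · obtain ⟨x, hx⟩ := Option.ne_none_iff_exists'.mp hgMF.1
    have hpw : (E.cfg r).p w = some x := hmfS.1.trans hx
    have hpx : (E.cfg r).p x = some w := by
      obtain ⟨w', hw1, hw2⟩ := hmfS.2.1
      rw [hpw] at hw1; cases Option.some.inj hw1; exact hw2
    have hgA := not_gUA_of_not_gU hgU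
    obtain ⟨hadj, hmx⟩ := adj_single_of_p hgA hpw
    have hpw' : (E.cfg (r+1)).p w = some x := hp'.trans hx
    refine ⟨x, hpw', single_frozen hmx hadj.symm hmwne hpx hpw, hadj, hmx, ?_, haa, hbb⟩
    rw [guardUpdateA_congr haa hbb (hpw'.trans hpw.symm)]; exact hgA
  · obtain ⟨x, hx⟩ := Option.ne_none_iff_exists'.mp hgMS.1
    have hpw : (E.cfg r).p w = some x := hmsE.1.trans hx
    have hpx : (E.cfg r).p x = some w := by
      obtain ⟨w', hw1, hw2⟩ := hmsE.2.1
      rw [hpw] at hw1; cases Option.some.inj hw1; exact hw2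
    have hgA := not_gUA_of_not_gU hgU
    obtain ⟨hadj, hmx⟩ := adj_single_of_p hgA hpw
    have hpw' : (E.cfg (r+1)).p w = some x := hp'.trans hx
    refine ⟨x, hpw', single_frozen hmx hadj.symm hmwne hpx hpw, hadj, hmx, ?_, haa, hbb⟩
    rw [guardUpdateA_congr haa hbb (hpw'.trans hpw.symm)]; exact hgA

/-- After a true-write of matched `w`, `w` is in a settled state with `s = e = true`. -/
lemma e_write_post (hmw : m w = some z) {r : ℕ} (ha : w ∈ E.act r)
    (he : (E.cfg (r+1)).e w = true) :
    ∃ x, (E.cfg (r+1)).p w = some x ∧ (E.cfg (r+1)).p x = some w ∧ G.Adj w x ∧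
      m x = none ∧ ¬ guardUpdateA G m (E.cfg (r+1)) w ∧
      (E.cfg (r+1)).s w = true ∧ (E.cfg (r+1)).e w = true := by
  have hmwne : m w ≠ none := by rw [hmw]; exact Option.some_ne_none _
  rcases true_write_cases hmw ha he with
    ⟨hgU, hgMF, hmfE, hloc⟩ | ⟨hgU, hgMF, hgMS, hmsE, hloc⟩
  · obtain ⟨q1, q2, q3, q4, q5⟩ := loc_eq_iff.mp hloc
    obtain ⟨x, hx⟩ := Option.ne_none_iff_exists'.mp hgMF.1
    have hpw : (E.cfg r).p w = some x := hmfE.1.trans hx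
    have hpx : (E.cfg r).p x = some w := by
      obtain ⟨w', hw1, hw2⟩ := hmfE.2.1
      rw [hpw] at hw1; cases Option.some.inj hw1; exact hw2
    have hgA := not_gUA_of_not_gU hgU
    obtain ⟨hadj, hmx⟩ := adj_single_of_p hgA hpw
    have hpw' : (E.cfg (r+1)).p w = some x := q1.trans hx
    refine ⟨x, hpw', single_frozen hmx hadj.symm hmwne hpx hpw, hadj, hmx, ?_, q4, q5⟩
    rw [guardUpdateA_congr q2 q3 (hpw'.trans hpw.symm)]; exact hgA
  · obtain ⟨q1, q2, q3, q4, q5⟩ := loc_eq_iff.mp hloc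
    obtain ⟨x, hx⟩ := Option.ne_none_iff_exists'.mp hgMS.1
    have hpw : (E.cfg r).p w = some x := hmsE.1.trans hx
    have hpx : (E.cfg r).p x = some w := by
      obtain ⟨w', hw1, hw2⟩ := hmsE.2.1
      rw [hpw] at hw1; cases Option.some.inj hw1; exact hw2
    have hgA := not_gUA_of_not_gU hgU
    obtain ⟨hadj, hmx⟩ := adj_single_of_p hgA hpw
    have hpw' : (E.cfg (r+1)).p w = some x := q1.trans hx
    refine ⟨x, hpw', single_frozen hmx hadj.symm hmwne hpx hpw, hadj, hmx, ?_, q4, q5⟩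
    rw [guardUpdateA_congr q2 q3 (hpw'.trans hpw.symm)]; exact hgA

lemma single_frozen_range {x : V} (hmx : m x = none) (hadj : G.Adj x w)
    (hmw : m w ≠ none) {i j : ℕ} (hij : i ≤ j) (hpx : (E.cfg i).p x = some w)
    (hpww : ∀ ρ, i ≤ ρ → ρ ≤ j → (E.cfg ρ).p w = some x) :
    (E.cfg j).p x = some w := by
  induction j, hij using Nat.le_induction with
  | base => exact hpx
  | succ k hk ih =>
    have hk' : k ≤ k + 1 := Nat.le_succ k
    exact single_frozen hmx hadj hmw
      (ih (fun ρ h1 h2 => hpww ρ h1 (le_trans h2 hk')))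
      (hpww k hk hk')

end Aux6
section Aux7
set_option linter.unusedSectionVars false
open Classical

variable {V : Type*} [Fintype V] [LinearOrder V] {G : SimpleGraph V} {m : V → Option V}
variable {E : MMExecution G m} {u v : V}

/-- After a second true-write, the matched pair is locked. -/
lemma second_write_locks (hmu : m u = some v) (hvu : m v = some u) {t1 t2 : ℕ}
    (h12 : t1 < t2) (h1a : u ∈ E.act t1) (h1e : (E.cfg (t1+1)).e u = true)
    (h2a : u ∈ E.act t2) (h2e : (E.cfg (t2+1)).e u = true) :
    PairInv G m (E.cfg (t2+1)) u v ∨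
      (PairInv G m (E.cfg (t2+1)) v u ∧ (E.cfg (t2+1)).e u = true) := by
  classical
  have hmune : m u ≠ none := by rw [hmu]; exact Option.some_ne_none _
  have hmvne : m v ≠ none := by rw [hvu]; exact Option.some_ne_none _
  obtain ⟨r0, hr1, hr2, hr3⟩ := partner_moves hmu hvu h12 h1a h1e h2a
  set S : Finset ℕ := (Finset.range t2).filter (fun ρ => v ∈ E.act ρ) with hSdef
  have hS0 : r0 ∈ S := by
    rw [hSdef]; exact Finset.mem_filter.mpr ⟨Finset.mem_range.mpr hr2, hr3⟩
  have hSne : S.Nonempty := ⟨r0, hS0⟩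
  set R := S.max' hSne with hRdef
  have hRmem : R ∈ S := S.max'_mem hSne
  have hRlt2 : R < t2 := Finset.mem_range.mp (Finset.mem_filter.mp hRmem).1
  have hRact : v ∈ E.act R := (Finset.mem_filter.mp hRmem).2
  have hR1 : R + 1 ≤ t2 := hRlt2
  have hlast : ∀ ρ, R < ρ → ρ < t2 → v ∉ E.act ρ := by
    intro ρ hρ1 hρ2 hin
    have hmemS : ρ ∈ S := Finset.mem_filter.mpr ⟨Finset.mem_range.mpr hρ2, hin⟩
    exact absurd (S.le_max' ρ hmemS) (not_le_of_gt hρ1)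
  have hvconst : ∀ ρ, R + 1 ≤ ρ → ρ ≤ t2 → (E.cfg ρ).loc v = (E.cfg (R+1)).loc v := by
    intro ρ hρ
    induction ρ, hρ using Nat.le_induction with
    | base => intro _; rfl
    | succ k hk ih =>
      intro hk2
      have hklt : k < t2 := lt_of_lt_of_le (Nat.lt_succ_self k) hk2
      exact (noact_loc (hlast k hk hklt)).trans (ih (le_of_lt hklt))
  have hvt2 : (E.cfg t2).loc v = (E.cfg (R+1)).loc v := hvconst t2 hR1 le_rfl
  rcases true_write_cases hmu h2a h2e with
    ⟨hgU2, hgMF2, hmfE2, hloc2⟩ | ⟨hgU2, hgMF2, hgMS2, hmsE2, hloc2⟩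
  -- u is First at t2
  · right
    obtain ⟨p1, p2, p3, p4, p5⟩ := loc_eq_iff.mp hloc2
    obtain ⟨x, hx⟩ := Option.ne_none_iff_exists'.mp hgMF2.1
    have hpu2 : (E.cfg t2).p u = some x := hmfE2.1.trans hx
    have hpx2 : (E.cfg t2).p x = some u := by
      obtain ⟨w', hw1, hw2⟩ := hmfE2.2.1
      rw [hpu2] at hw1; cases Option.some.inj hw1; exact hw2
    have hgAu2 := not_gUA_of_not_gU hgU2
    obtain ⟨hadjux, hmx⟩ := adj_single_of_p hgAu2 hpu2
    have hsu2 : (E.cfg t2).s u = true := hmfE2.2.2.1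
    have hev2 : (E.cfg t2).e v = true := hmfE2.2.2.2.2
    have hevR : (E.cfg (R+1)).e v = true := (loce hvt2).symm.trans hev2
    obtain ⟨y, hpvR, hpyR, hadjvy, hmy, hgAvR, hsvR, -⟩ := e_write_post hvu hRact hevR
    have hpv2 : (E.cfg t2).p v = some y := (locp hvt2).trans hpvR
    have hsv2 : (E.cfg t2).s v = true := (locs hvt2).trans hsvR
    have hgAv2 : ¬ guardUpdateA G m (E.cfg t2) v := by
      rw [guardUpdateA_congr (loca hvt2) (locb hvt2) (locp hvt2)]; exact hgAvR
    have hpy2 : (E.cfg t2).p y = some v :=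
      single_frozen_range hmy hadjvy.symm hmvne hR1 hpyR
        (fun ρ h1 h2 => (locp (hvconst ρ h1 h2)).trans hpvR)
    have haskSv2 : askSecond m (E.cfg t2) v = some y := hmfE2.2.2.2.1.symm.trans hpv2
    have hnav2 : ¬ Activable G m (E.cfg t2) v :=
      not_activable_second hvu hmu hpv2 hpy2 hsv2 hev2 haskSv2 hgAv2 hsu2 hmfE2.1
    have hvnact : v ∉ E.act t2 := fun hh => hnav2 (act_loc hh).1
    have hlocv := noact_loc hvnact
    refine ⟨⟨y, x, ⟨(locp hlocv).trans hpv2,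
      single_frozen hmy hadjvy.symm hmvne hpy2 hpv2,
      hadjvy, hmy, (locs hlocv).trans hsv2, (loce hlocv).trans hev2, ?_, ?_⟩,
      ⟨p1.trans hx, single_frozen hmx hadjux.symm hmune hpx2 hpu2,
        hadjux, hmx, p4, ?_, ?_⟩⟩, h2e⟩
    · rw [askSecond_congr hvu hmu (loca hlocv) (locb hlocv) p2 p3]; exact haskSv2
    · rw [guardUpdateA_congr (loca hlocv) (locb hlocv) (locp hlocv)]; exact hgAv2
    · rw [askFirst_congr hmu p2 p3 (loca hlocv) (locb hlocv)]
      exact hmfE2.1.symm.trans hpu2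
    · rw [guardUpdateA_congr p2 p3 ((p1.trans hx).trans hpu2.symm)]; exact hgAu2
  -- u is Second at t2
  · left
    obtain ⟨p1, p2, p3, p4, p5⟩ := loc_eq_iff.mp hloc2
    obtain ⟨y, hy⟩ := Option.ne_none_iff_exists'.mp hgMS2.1
    have hpu2 : (E.cfg t2).p u = some y := hmsE2.1.trans hy
    have hpy2 : (E.cfg t2).p y = some u := by
      obtain ⟨w', hw1, hw2⟩ := hmsE2.2.1
      rw [hpu2] at hw1; cases Option.some.inj hw1; exact hw2
    have hgAu2 := not_gUA_of_not_gU hgU2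
    obtain ⟨hadjuy, hmy⟩ := adj_single_of_p hgAu2 hpu2
    have hsv2 : (E.cfg t2).s v = true := by
      obtain ⟨-, v', hv', hsv, -⟩ := hgMS2
      rw [hmu] at hv'; cases Option.some.inj hv'; exact hsv
    have hsvR : (E.cfg (R+1)).s v = true := (locs hvt2).symm.trans hsv2
    obtain ⟨x, hpvR, hpxR, hadjvx, hmx, hgAvR, -, -⟩ := s_write_post hvu hRact hsvR
    have hpv2 : (E.cfg t2).p v = some x := (locp hvt2).trans hpvR
    have hgAv2 : ¬ guardUpdateA G m (E.cfg t2) v := by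
      rw [guardUpdateA_congr (loca hvt2) (locb hvt2) (locp hvt2)]; exact hgAvR
    have hpx2 : (E.cfg t2).p x = some v :=
      single_frozen_range hmx hadjvx.symm hmvne hR1 hpxR
        (fun ρ h1 h2 => (locp (hvconst ρ h1 h2)).trans hpvR)
    have haskFv2 : askFirst m (E.cfg t2) v = some x := hmsE2.2.2.symm.trans hpv2
    have hvfacts : (E.cfg (t2+1)).p v = some x ∧ (E.cfg (t2+1)).s v = true ∧
        (E.cfg (t2+1)).a v = (E.cfg t2).a v ∧ (E.cfg (t2+1)).b v = (E.cfg t2).b v := by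
      by_cases hv : v ∈ E.act t2
      · have hloc := (act_loc hv).2
        have hgUv : ¬ guardUpdate G m (E.cfg t2) v := not_gU hgAv2 hpv2 hpx2
        by_cases hMF : guardMatchFirst m (E.cfg t2) v
        · rw [localNext_MF hmvne hgUv hMF] at hloc
          obtain ⟨l1, l2, l3, l4, l5⟩ := loc_eq_iff.mp hloc
          have hmfS : mfS m (E.cfg t2) v u :=
            ⟨hpv2.trans haskFv2.symm, ⟨x, hpv2, hpx2⟩, Or.inl hmsE2.1⟩
          refine ⟨by rw [l1, haskFv2], ?_, l2, l3⟩
          have hh : (E.cfg (t2+1)).s v =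
              pb (∃ w, m v = some w ∧ mfS m (E.cfg t2) v w) := l4
          rw [hh]; exact pb_true.mpr ⟨u, hvu, hmfS⟩
        · have hMS : ¬ guardMatchSecond m (E.cfg t2) v := by
            rintro ⟨hS, -⟩; rw [askS_none hvu hmu haskFv2] at hS; exact hS rfl
          have hRM : ¬ guardResetMatch m (E.cfg t2) v := by
            rintro (⟨hF, -, -⟩ | ⟨hS, -, -⟩)
            · rw [haskFv2] at hF; exact nomatch hF
            · rw [askS_none hvu hmu haskFv2] at hS; exact hS rfl
          rw [localNext_id hmvne hgUv hMF hMS hRM] at hloc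
          exact ⟨(locp hloc).trans hpv2, (locs hloc).trans hsv2, loca hloc, locb hloc⟩
      · have hloc := noact_loc hv
        exact ⟨(locp hloc).trans hpv2, (locs hloc).trans hsv2, loca hloc, locb hloc⟩
    obtain ⟨hpv', hsv', hav', hbv'⟩ := hvfacts
    refine ⟨y, x, ⟨p1.trans hy, single_frozen hmy hadjuy.symm hmune hpy2 hpu2,
      hadjuy, hmy, p4, p5, ?_, ?_⟩,
      ⟨hpv', single_frozen hmx hadjvx.symm hmvne hpx2 hpv2, hadjvx, hmx, hsv', ?_, ?_⟩⟩
    · rw [askSecond_congr hmu hvu p2 p3 hav' hbv']; exact hy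
    · rw [guardUpdateA_congr p2 p3 ((p1.trans hy).trans hpu2.symm)]; exact hgAu2
    · rw [askFirst_congr hvu hav' hbv' p2 p3]; exact haskFv2
    · rw [guardUpdateA_congr hav' hbv' (hpv'.trans hpv2.symm)]; exact hgAv2

/-- No three true-writes. -/
lemma no_three (hmu : m u = some v) (hvu : m v = some u) {t1 t2 t3 : ℕ}
    (h12 : t1 < t2) (h23 : t2 < t3)
    (h1a : u ∈ E.act t1) (h1e : (E.cfg (t1+1)).e u = true)
    (h2a : u ∈ E.act t2) (h2e : (E.cfg (t2+1)).e u = true)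
    (h3a : u ∈ E.act t3) : False := by
  have h3 : t2 + 1 ≤ t3 := h23
  rcases second_write_locks hmu hvu h12 h1a h1e h2a h2e with h | ⟨h, he⟩
  · have := (pairInv_forever hmu hvu h t3 h3).1
    exact pairInv_na2 hmu hvu this (act_loc h3a).1
  · obtain ⟨hPI, hePI⟩ := pairInv_forever hvu hmu h t3 h3
    exact pairInv_na1 hvu hmu hPI (hePI he) (act_loc h3a).1

end Aux7
/-- In any execution, a matched vertex writes `True` into its `end`
variable in at most two transitions. -/
theorem stmt2 {V : Type*} [Fintype V] [LinearOrder V]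
    (G : SimpleGraph V) (m : V → Option V) (hm : MaxMatchingOn G m)
    (E : MMExecution G m) (u : V) (hu : m u ≠ none) :
    ∀ T : Finset ℕ,
      (∀ i ∈ T, u ∈ E.act i ∧ (E.cfg (i + 1)).e u = true) → T.card ≤ 2 := by
  intro T hT
  by_contra hcard
  push_neg at hcard
  obtain ⟨v, hmu⟩ := Option.ne_none_iff_exists'.mp hu
  have hvu := hm.symm u v hmu
  have hne1 : T.Nonempty := Finset.card_pos.mp (by omega)
  have ht1 : T.min' hne1 ∈ T := T.min'_mem hne1
  have hc1 : 2 ≤ (T.erase (T.min' hne1)).card := by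
    rw [Finset.card_erase_of_mem ht1]; omega
  have hne2 : (T.erase (T.min' hne1)).Nonempty := Finset.card_pos.mp (by omega)
  have ht2' : (T.erase (T.min' hne1)).min' hne2 ∈ T.erase (T.min' hne1) :=
    Finset.min'_mem _ hne2
  have ht2 : (T.erase (T.min' hne1)).min' hne2 ∈ T := Finset.mem_of_mem_erase ht2'
  have hc2 : 1 ≤ ((T.erase (T.min' hne1)).erase ((T.erase (T.min' hne1)).min' hne2)).card := by
    rw [Finset.card_erase_of_mem ht2']; omega
  obtain ⟨t3, ht3'⟩ := Finset.card_pos.mp hc2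
  have ht3'' : t3 ∈ T.erase (T.min' hne1) := Finset.mem_of_mem_erase ht3'
  have ht3 : t3 ∈ T := Finset.mem_of_mem_erase ht3''
  have h12 : T.min' hne1 < (T.erase (T.min' hne1)).min' hne2 :=
    lt_of_le_of_ne (T.min'_le _ ht2) (Ne.symm (Finset.ne_of_mem_erase ht2'))
  have h23 : (T.erase (T.min' hne1)).min' hne2 < t3 :=
    lt_of_le_of_ne (Finset.min'_le _ _ ht3'') (Ne.symm (Finset.ne_of_mem_erase ht3'))
  obtain ⟨h1a, h1e⟩ := hT _ ht1
  obtain ⟨h2a, h2e⟩ := hT _ ht2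
  obtain ⟨h3a, -⟩ := hT _ ht3
  exact no_three hmu hvu h12 h23 h1a h1e h2a h2e h3a
end

section
/- Let (x,u,v,y) be a 3-augmenting path on (G,M) and let C be a stable configuration of the algorithm MaxMatch. If in C we have p_x = u, p_u = x, p_v = y and p_y = v, then end_x = end_u = end_v = end_y = True in C. -/
open Classical

/-- On a 3-augmenting path `(x,u,v,y)` on `(G,M)` that is fully rematched in
a stable configuration, all four `end` variables are `True`. -/
theorem stmt9 {V : Type*} [Fintype V] [LinearOrder V]
    (G : SimpleGraph V) (m : V → Option V) (hm : MaxMatchingOn G m)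
    (C : MMConfig V) (x u v y : V) (hpath : IsAug3 G (Mrel m) x u v y)
    (hC : Stable G m C)
    (h1 : C.p x = some u) (h2 : C.p u = some x)
    (h3 : C.p v = some y) (h4 : C.p y = some v) :
    C.e x = true ∧ C.e u = true ∧ C.e v = true ∧ C.e y = true := by
  obtain ⟨hxu, hxv, hxy, huv, huy, hvy, axu, auv, avy, hMuv, hMxu, hMvy⟩ := hpath
  have hmu : m u = some v := hMuv
  have hmv : m v = some u := hm.symm u v hmu
  -- negated guards for the matched vertices u, v
  have hGU_u : ¬ guardUpdate G m C u := fun h =>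
    hC u (Or.inr ⟨by simp [hmu], Or.inl h⟩)
  have hGU_v : ¬ guardUpdate G m C v := fun h =>
    hC v (Or.inr ⟨by simp [hmv], Or.inl h⟩)
  have hGMF_u : ¬ guardMatchFirst m C u := fun h =>
    hC u (Or.inr ⟨by simp [hmu], Or.inr (Or.inl h)⟩)
  have hGMF_v : ¬ guardMatchFirst m C v := fun h =>
    hC v (Or.inr ⟨by simp [hmv], Or.inr (Or.inl h)⟩)
  have hGMS_u : ¬ guardMatchSecond m C u := fun h =>
    hC u (Or.inr ⟨by simp [hmu], Or.inr (Or.inr (Or.inl h))⟩)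
  have hGMS_v : ¬ guardMatchSecond m C v := fun h =>
    hC v (Or.inr ⟨by simp [hmv], Or.inr (Or.inr (Or.inl h))⟩)
  have hGRM_u : ¬ guardResetMatch m C u := fun h =>
    hC u (Or.inr ⟨by simp [hmu], Or.inr (Or.inr (Or.inr h))⟩)
  have hGRM_v : ¬ guardResetMatch m C v := fun h =>
    hC v (Or.inr ⟨by simp [hmv], Or.inr (Or.inr (Or.inr h))⟩)
  -- x and y are single
  have hsn_u : inSNopt G m u (C.p u) := by
    by_contra h
    exact hGU_u (Or.inl (Or.inr (Or.inr (Or.inr h))))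
  have hsn_v : inSNopt G m v (C.p v) := by
    by_contra h
    exact hGU_v (Or.inl (Or.inr (Or.inr (Or.inr h))))
  have hmx : m x = none := by
    rcases hsn_u with h | ⟨w, hw, _, hwn⟩
    · rw [h2] at h; cases h
    · rw [h2] at hw; obtain rfl := Option.some.inj hw; exact hwn
  have hmy : m y = none := by
    rcases hsn_v with h | ⟨w, hw, _, hwn⟩
    · rw [h3] at h; cases h
    · rw [h3] at hw; obtain rfl := Option.some.inj hw; exact hwn
  -- end_x = end_u and end_y = end_v
  have hGUE_x : ¬ guardUpdateEnd G m C x := fun h =>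
    hC x (Or.inl ⟨hmx, Or.inr (Or.inr h)⟩)
  have hGUE_y : ¬ guardUpdateEnd G m C y := fun h =>
    hC y (Or.inl ⟨hmy, Or.inr (Or.inr h)⟩)
  have hex : C.e x = C.e u := by
    by_contra h
    exact hGUE_x ⟨u, h1, axu, by simp [hmu], h2, h⟩
  have hey : C.e y = C.e v := by
    by_contra h
    exact hGUE_y ⟨v, h4, avy.symm, by simp [hmv], h3, h⟩
  have hpu_ne : C.p u ≠ none := by simp [h2]
  have hpv_ne : C.p v ≠ none := by simp [h3]
  -- consequences of ¬ ResetMatch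
  have hAsk_u : askFirst m C u ≠ none ∨ askSecond m C u ≠ none := by
    by_contra h
    push_neg at h
    exact hGRM_u (Or.inl ⟨h.1, h.2, fun hc => hpu_ne hc.1⟩)
  have hAsk_v : askFirst m C v ≠ none ∨ askSecond m C v ≠ none := by
    by_contra h
    push_neg at h
    exact hGRM_v (Or.inl ⟨h.1, h.2, fun hc => hpv_ne hc.1⟩)
  have hsimp_u : askSecond m C u ≠ none → C.s v = true := by
    intro h
    by_contra hs
    exact hGRM_u (Or.inr ⟨h, hpu_ne, v, hmu, by simpa using hs⟩)
  have hsimp_v : askSecond m C v ≠ none → C.s u = true := by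
    intro h
    by_contra hs
    exact hGRM_v (Or.inr ⟨h, hpv_ne, u, hmv, by simpa using hs⟩)
  -- consequences of ¬ MatchFirst / ¬ MatchSecond
  have hMF_u : askFirst m C u ≠ none →
      C.p u = askFirst m C u ∧ (C.s u = true ↔ mfS m C u v) ∧
        (C.e u = true ↔ mfE m C u v) := by
    intro h
    by_contra hcon
    refine hGMF_u ⟨h, v, hmu, ?_⟩
    by_contra hd
    push_neg at hd
    exact hcon ⟨hd.1, hd.2.1, hd.2.2⟩
  have hMF_v : askFirst m C v ≠ none →
      C.p v = askFirst m C v ∧ (C.s v = true ↔ mfS m C v u) ∧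
        (C.e v = true ↔ mfE m C v u) := by
    intro h
    by_contra hcon
    refine hGMF_v ⟨h, u, hmv, ?_⟩
    by_contra hd
    push_neg at hd
    exact hcon ⟨hd.1, hd.2.1, hd.2.2⟩
  have hMS_u : askSecond m C u ≠ none → C.s v = true →
      C.p u = askSecond m C u ∧ (C.e u = true ↔ msE m C u v) := by
    intro h hs
    by_contra hcon
    refine hGMS_u ⟨h, v, hmu, hs, ?_⟩
    by_contra hd
    push_neg at hd
    exact hcon ⟨hd.1, hd.2.1⟩
  have hMS_v : askSecond m C v ≠ none → C.s u = true →
      C.p v = askSecond m C v ∧ (C.e v = true ↔ msE m C v u) := by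
    intro h hs
    by_contra hcon
    refine hGMS_v ⟨h, u, hmv, hs, ?_⟩
    by_contra hd
    push_neg at hd
    exact hcon ⟨hd.1, hd.2.1⟩
  -- askSecond u ≠ none forces askFirst v ≠ none
  have hSF_u : askSecond m C u ≠ none → askFirst m C v ≠ none := by
    intro h
    by_contra h'
    apply h
    simp only [askSecond, hmu]
    rw [if_neg (by simp [h'])]
  have hppu : ppEq C u := ⟨x, h2, h1⟩
  have hppv : ppEq C v := ⟨y, h3, h4⟩
  by_cases hF : askFirst m C u = none
  · -- u is Second, v is First
    have hSu : askSecond m C u ≠ none := hAsk_u.resolve_left (by simpa using hF)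
    have hFv : askFirst m C v ≠ none := hSF_u hSu
    have hsv : C.s v = true := hsimp_u hSu
    obtain ⟨hpFv, _, heIv⟩ := hMF_v hFv
    obtain ⟨hpSu, heIu⟩ := hMS_u hSu hsv
    have heu : C.e u = true := heIu.mpr ⟨hpSu, hppu, hpFv⟩
    have hev : C.e v = true := heIv.mpr ⟨hpFv, hppv, hsv, hpSu, heu⟩
    exact ⟨hex.trans heu, heu, hev, hey.trans hev⟩
  · -- u is First
    obtain ⟨hpFu, _, heIu⟩ := hMF_u hF
    by_cases hFv : askFirst m C v = none
    · -- v is Second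
      have hSv : askSecond m C v ≠ none := hAsk_v.resolve_left (by simpa using hFv)
      have hsu : C.s u = true := hsimp_v hSv
      obtain ⟨hpSv, heIv⟩ := hMS_v hSv hsu
      have hev : C.e v = true := heIv.mpr ⟨hpSv, hppv, hpFu⟩
      have heu : C.e u = true := heIu.mpr ⟨hpFu, hppu, hsu, hpSv, hev⟩
      exact ⟨hex.trans heu, heu, hev, hey.trans hev⟩
    · -- both First: impossible
      exfalso
      obtain ⟨hpFv, _, _⟩ := hMF_v hFv
      have hau : askFirst m C u = C.a u ∧
          (optLT (C.a u) (C.a v) ∨ (C.a u = C.a v ∧ C.b u = none) ∨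
            (C.a u = C.a v ∧ C.b v ≠ none ∧ u < v)) := by
        simp only [askFirst, hmu] at hF ⊢
        by_cases hc : C.a u ≠ none ∧ C.a v ≠ none ∧
            2 ≤ ({C.a u, C.b u, C.a v, C.b v} : Finset (Option V)).card ∧
            (optLT (C.a u) (C.a v) ∨ (C.a u = C.a v ∧ C.b u = none) ∨
              (C.a u = C.a v ∧ C.b v ≠ none ∧ u < v))
        · exact ⟨if_pos hc, hc.2.2.2⟩
        · exact absurd (if_neg hc) hF
      have hav : askFirst m C v = C.a v ∧
          (optLT (C.a v) (C.a u) ∨ (C.a v = C.a u ∧ C.b v = none) ∨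
            (C.a v = C.a u ∧ C.b u ≠ none ∧ v < u)) := by
        simp only [askFirst, hmv] at hFv ⊢
        by_cases hc : C.a v ≠ none ∧ C.a u ≠ none ∧
            2 ≤ ({C.a v, C.b v, C.a u, C.b u} : Finset (Option V)).card ∧
            (optLT (C.a v) (C.a u) ∨ (C.a v = C.a u ∧ C.b v = none) ∨
              (C.a v = C.a u ∧ C.b u ≠ none ∧ v < u))
        · exact ⟨if_pos hc, hc.2.2.2⟩
        · exact absurd (if_neg hc) hFv
      have haux : C.a u = some x := by rw [← hau.1, ← hpFu, h2]
      have havy : C.a v = some y := by rw [← hav.1, ← hpFv, h3]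
      have hne : C.a u ≠ C.a v := by
        rw [haux, havy]
        simp [hxy]
      rcases hau.2 with h | ⟨h, _⟩ | ⟨h, _⟩
      · rcases hav.2 with h' | ⟨h', _⟩ | ⟨h', _⟩
        · rw [haux, havy] at h h'
          simp only [optLT] at h h'
          exact absurd h' (not_lt.mpr h.le)
        · exact hne h'.symm
        · exact hne h'.symm
      · exact hne h
      · exact hne h
end

section
/- Let (x,u,v,y) be a 3-augmenting path on (G,M) and let C be a configuration of the algorithm MaxMatch. If p_u = x, p_x ≠ u, p_v = y and p_y ≠ v hold in C, then C is not stable. -/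
open Classical

/-- On a 3-augmenting path `(x,u,v,y)` on `(G,M)`: if `p_u=x`, `p_x≠u`,
`p_v=y` and `p_y≠v`, the configuration is not stable. -/
theorem stmt11 {V : Type*} [Fintype V] [LinearOrder V]
    (G : SimpleGraph V) (m : V → Option V) (hm : MaxMatchingOn G m)
    (C : MMConfig V) (x u v y : V) (hpath : IsAug3 G (Mrel m) x u v y)
    (h1 : C.p u = some x) (h2 : C.p x ≠ some u)
    (h3 : C.p v = some y) (h4 : C.p y ≠ some v) :
    ¬ Stable G m C := by
  intro hst
  obtain ⟨hxu, hxv, hxy, huv, huy, hvy, axu, auv, avy, hMuv, hMxu, hMvy⟩ := hpath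
  have muv : m u = some v := hMuv
  have mvu : m v = some u := hm.symm u v muv
  have hune : m u ≠ none := by simp [muv]
  have hvne : m v ≠ none := by simp [mvu]
  have nMFu : ¬ guardMatchFirst m C u := fun h =>
    hst u (Or.inr ⟨hune, Or.inr (Or.inl h)⟩)
  have nMFv : ¬ guardMatchFirst m C v := fun h =>
    hst v (Or.inr ⟨hvne, Or.inr (Or.inl h)⟩)
  have nRMu : ¬ guardResetMatch m C u := fun h =>
    hst u (Or.inr ⟨hune, Or.inr (Or.inr (Or.inr h))⟩)
  have nRMv : ¬ guardResetMatch m C v := fun h =>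
    hst v (Or.inr ⟨hvne, Or.inr (Or.inr (Or.inr h))⟩)
  -- From ¬MatchFirst: if askFirst ≠ none then p = askFirst and s = false.
  have sfalse : ∀ w z pw, m w = some z → askFirst m C w ≠ none →
      ¬ guardMatchFirst m C w → C.p w = some pw → C.p pw ≠ some w →
      C.s w = false ∧ C.p w = askFirst m C w := by
    intro w z pw hmw haf ng hpw hppw
    have hmfs : ¬ mfS m C w z := by
      rintro ⟨-, ⟨w', hw', hw''⟩, -⟩
      rw [hpw] at hw'
      obtain rfl : pw = w' := Option.some_injective _ hw'
      exact hppw hw''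
    constructor
    · by_contra hs
      have hs' : C.s w = true := by cases h : C.s w <;> simp_all
      exact ng ⟨haf, z, hmw, Or.inr (Or.inl (by simp [hs', hmfs]))⟩
    · by_contra hp
      exact ng ⟨haf, z, hmw, Or.inl hp⟩
  -- Step 1: askSecond u = none and askSecond v = none.
  have asu : askSecond m C u = none := by
    by_contra hasu
    have hafv : askFirst m C v ≠ none := by
      intro h
      exact hasu (by simp [askSecond, muv, h])
    have hsv : C.s v = false := (sfalse v u y mvu hafv nMFv h3 h4).1
    exact nRMu (Or.inr ⟨hasu, by simp [h1], v, muv, hsv⟩)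
  have asv : askSecond m C v = none := by
    by_contra hasv
    have hafu : askFirst m C u ≠ none := by
      intro h
      exact hasv (by simp [askSecond, mvu, h])
    have hsu : C.s u = false := (sfalse u v x muv hafu nMFu h1 h2).1
    exact nRMv (Or.inr ⟨hasv, by simp [h3], u, mvu, hsu⟩)
  -- Step 2: askFirst u ≠ none and askFirst v ≠ none.
  have afu : askFirst m C u ≠ none := by
    intro hafu
    exact nRMu (Or.inl ⟨hafu, asu, by simp [h1]⟩)
  have afv : askFirst m C v ≠ none := by
    intro hafv
    exact nRMv (Or.inl ⟨hafv, asv, by simp [h3]⟩)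
  -- Step 3: C.a u = some x and C.a v = some y.
  have afval : ∀ w z, m w = some z →
      askFirst m C w = C.a w ∨ askFirst m C w = none := by
    intro w z hmw
    simp only [askFirst, hmw]
    split_ifs <;> simp
  have hau : C.a u = some x := by
    have hp := (sfalse u v x muv afu nMFu h1 h2).2
    rcases afval u v muv with h | h
    · rw [← h, ← hp, h1]
    · exact absurd h afu
  have hav : C.a v = some y := by
    have hp := (sfalse v u y mvu afv nMFv h3 h4).2
    rcases afval v u mvu with h | h
    · rw [← h, ← hp, h3]
    · exact absurd h afv
  -- Step 4: askSecond v ≠ none, contradiction.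
  have hmem : (some y : Option V) ∈
      (({C.a v, C.b v} : Finset (Option V)) \ {C.a u}) := by
    rw [Finset.mem_sdiff]
    constructor
    · simp [hav]
    · simp only [Finset.mem_singleton, hau]
      intro h
      exact hxy (Option.some_injective _ h).symm
  have hlo : lowestOpt (({C.a v, C.b v} : Finset (Option V)) \ {C.a u}) ≠ none := by
    unfold lowestOpt lowestSet
    split
    · simp
    · next h =>
        exact absurd (⟨y, by
          simp only [Finset.mem_filter, Finset.mem_univ, true_and, Set.mem_setOf_eq]
          exact hmem⟩ : Finset.Nonempty _) h
  apply hlo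
  rw [← asv]
  simp only [askSecond, mvu]
  rw [if_pos afu]
end

section
/- Let u be a matched vertex and let E be an execution of the algorithm MaxMatch. For every configuration C of E that occurs at or after a transition of E in which u executed some rule: if end_u = True in C, then s_u = True in C. -/
open Classical

section MaxMatchPreamble

variable {V : Type*} [Fintype V] [LinearOrder V]

variable (G : SimpleGraph V) (m : V → Option V)

/-- After a move of a matched vertex, `e = true` implies `s = true`. -/
lemma localNext_e_imp_s (C : MMConfig V) (u : V) (hu : m u ≠ none)
    (hA : Activable G m C u) :
    (localNext G m C u).e = true → (localNext G m C u).s = true := by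
  rw [localNext, if_neg hu]
  split_ifs with h1 h2 h3 h4
  · intro h; exact h
  · intro h
    simp only [pb] at h ⊢
    rw [if_pos]
    obtain ⟨v, hv, e1, e2, e3, e4, e5⟩ : ∃ v, m u = some v ∧ mfE m C u v := by
      by_contra hc
      rw [if_neg hc] at h
      exact Bool.false_ne_true h
    exact ⟨v, hv, e1, e2, Or.inl e4⟩
  · intro h; exact h
  · intro h; exact h
  · rcases hA with ⟨h, _⟩ | ⟨_, hg⟩
    · exact absurd h hu
    · rcases hg with hg | hg | hg | hg
      · exact absurd hg h1
      · exact absurd hg h2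
      · exact absurd hg h3
      · exact absurd hg h4

end MaxMatchPreamble

/-- After a matched vertex `u` has executed some rule, `end_u = True`
implies `s_u = True`. -/
theorem stmt14 {V : Type*} [Fintype V] [LinearOrder V]
    (G : SimpleGraph V) (m : V → Option V) (hm : MaxMatchingOn G m)
    (E : MMExecution G m) (u : V) (hu : m u ≠ none) (j : ℕ)
    (h : ∃ i, i < j ∧ u ∈ E.act i)
    (he : (E.cfg j).e u = true) :
    (E.cfg j).s u = true := by
  obtain ⟨i, hij, hact⟩ := h
  suffices H : ∀ k, i < k → ((E.cfg k).e u = true → (E.cfg k).s u = true) from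
    H j hij he
  intro k hk
  induction k with
  | zero => omega
  | succ n ih =>
    rcases E.valid n with hstep | ⟨hemp, _, heq⟩
    · by_cases hmem : u ∈ E.act n
      · have hloc := hstep.2.2.1 u hmem
        have hA := hstep.2.1 u hmem
        have hkey := localNext_e_imp_s G m (E.cfg n) u hu hA
        have he' : (E.cfg (n+1)).e u = (localNext G m (E.cfg n) u).e :=
          congrArg MMLocal.e hloc
        have hs' : (E.cfg (n+1)).s u = (localNext G m (E.cfg n) u).s :=
          congrArg MMLocal.s hloc
        intro h1
        rw [hs']; exact hkey (he' ▸ h1)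
      · have hloc := hstep.2.2.2 u hmem
        have hi : i < n := by
          rcases Nat.lt_succ_iff_lt_or_eq.mp hk with h' | h'
          · exact h'
          · exact absurd (h' ▸ hact) hmem
        have he' : (E.cfg (n+1)).e u = (E.cfg n).e u := congrArg MMLocal.e hloc
        have hs' : (E.cfg (n+1)).s u = (E.cfg n).s u := congrArg MMLocal.s hloc
        intro h1
        rw [hs']; exact ih hi (he' ▸ h1)
    · rw [heq]
      have hi : i < n := by
        rcases Nat.lt_succ_iff_lt_or_eq.mp hk with h' | h'
        · exact h'
        · subst h'; exact absurd (hemp ▸ hact) (Set.notMem_empty u)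
      exact ih hi
end

section
/- Let u be a matched vertex and let E be an execution of the algorithm MaxMatch containing a transition C₀ ↦ C₁ in which u makes a move. Then in every configuration of E at or after C₁, the first part of the guard of the Update rule of u is false; that is, none of the following holds: (α_u > β_u), (α_u, β_u ∉ single(N(u)) ∪ {null}), (α_u = β_u ∧ α_u ≠ null), or p_u ∉ single(N(u)) ∪ {null}. -/
open Classical

section Aux

variable {V : Type*} [Fintype V] [LinearOrder V]

lemma lowestSet_eq_some {S : Set V} {w : V} (h : lowestSet S = some w) :
    w ∈ S ∧ ∀ y ∈ S, w ≤ y := by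
  unfold lowestSet at h
  split at h
  · next hne =>
    injection h with h
    subst h
    refine ⟨?_, fun y hy => Finset.min'_le _ _ (by simpa using hy)⟩
    have := Finset.min'_mem _ hne
    simpa using this
  · exact absurd h (by simp)

variable (G : SimpleGraph V) (m : V → Option V)

/-- `locBad` is `guardUpdateA` expressed on the local state of `u`. -/
def locBad (u : V) (l : MMLocal V) : Prop :=
  optLT l.b l.a ∨
  (¬ inSNopt G m u l.a ∨ ¬ inSNopt G m u l.b) ∨
  (l.a = l.b ∧ l.a ≠ none) ∨
  ¬ inSNopt G m u l.p

lemma guardUpdateA_iff_locBad (C : MMConfig V) (u : V) :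
    guardUpdateA G m C u ↔ locBad G m u (C.loc u) := Iff.rfl

lemma notBad_of {u : V} {p a b : Option V} {s e : Bool}
    (hba : ¬ optLT b a) (hsa : inSNopt G m u a) (hsb : inSNopt G m u b)
    (hab : a = b → a = none) (hp : inSNopt G m u p) :
    ¬ locBad G m u ⟨p, a, b, s, e⟩ := by
  intro hbad
  rcases hbad with h1 | (h2 | h2) | h3 | h4
  · exact hba h1
  · exact h2 hsa
  · exact h2 hsb
  · exact h3.2 (hab h3.1)
  · exact h4 hp

lemma askFirst_cases (C : MMConfig V) (u : V) :
    askFirst m C u = none ∨ askFirst m C u = C.a u := by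
  unfold askFirst
  rcases m u with _ | v
  · exact Or.inl rfl
  · dsimp only
    split_ifs <;> simp

lemma askSecond_cases (C : MMConfig V) (u : V) :
    askSecond m C u = none ∨ askSecond m C u = C.a u ∨ askSecond m C u = C.b u := by
  unfold askSecond
  rcases m u with _ | v
  · exact Or.inl rfl
  · dsimp only
    split_ifs with h
    · rcases hl : lowestOpt (({C.a u, C.b u} : Finset (Option V)) \ {C.a v}) with _ | x
      · exact Or.inl rfl
      · have hmem := (lowestSet_eq_some hl).1
        simp only [Set.mem_setOf_eq, Finset.mem_sdiff, Finset.mem_insert,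
          Finset.mem_singleton] at hmem
        rcases hmem.1 with h1 | h1
        · exact Or.inr (Or.inl h1)
        · exact Or.inr (Or.inr h1)
    · exact Or.inl rfl

lemma bestRematch_ok (C : MMConfig V) (u : V) :
    ¬ optLT (bestRematch G m C u).2 (bestRematch G m C u).1 ∧
    inSNopt G m u (bestRematch G m C u).1 ∧
    inSNopt G m u (bestRematch G m C u).2 ∧
    ((bestRematch G m C u).1 = (bestRematch G m C u).2 →
      (bestRematch G m C u).1 = none) := by
  unfold bestRematch
  dsimp only
  rcases ha : lowestSet (candSet G m C u) with _ | w
  · exact ⟨fun h => h, Or.inl rfl, Or.inl rfl, fun _ => rfl⟩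
  · obtain ⟨hwmem, hwmin⟩ := lowestSet_eq_some ha
    simp only [Option.elim]
    rcases hb : lowestSet (candSet G m C u \ {w}) with _ | y
    · exact ⟨fun h => h, Or.inr ⟨w, rfl, hwmem.1, hwmem.2.1⟩, Or.inl rfl,
        fun h => absurd h (by simp)⟩
    · obtain ⟨hymem, -⟩ := lowestSet_eq_some hb
      have hyc : y ∈ candSet G m C u := hymem.1
      have hyw : y ≠ w := hymem.2
      have hwy : w < y := lt_of_le_of_ne (hwmin y hyc) (Ne.symm hyw)
      refine ⟨not_lt.mpr hwy.le, Or.inr ⟨w, rfl, hwmem.1, hwmem.2.1⟩,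
        Or.inr ⟨y, rfl, hyc.1, hyc.2.1⟩, fun h => ?_⟩
      exact absurd (Option.some_injective _ h) hyw.symm

lemma localNext_notBad (C : MMConfig V) (u : V) (hu : m u ≠ none) :
    ¬ locBad G m u (localNext G m C u) := by
  unfold localNext
  rw [if_neg hu]
  split_ifs with h1 h2 h3 h4
  · obtain ⟨q1, q2, q3, q4⟩ := bestRematch_ok G m C u
    exact notBad_of G m q1 q2 q3 q4 (Or.inl rfl)
  all_goals
    have hA : ¬ guardUpdateA G m C u := fun h => h1 (Or.inl h)
    unfold guardUpdateA at hA
    push_neg at hA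
    obtain ⟨hba, ⟨hsa, hsb⟩, hab, hp⟩ := hA
  · refine notBad_of G m hba hsa hsb hab ?_
    rcases askFirst_cases m C u with hf | hf <;> rw [hf]
    · exact Or.inl rfl
    · exact hsa
  · refine notBad_of G m hba hsa hsb hab ?_
    rcases askSecond_cases m C u with hf | hf | hf <;> rw [hf]
    · exact Or.inl rfl
    · exact hsa
    · exact hsb
  · exact notBad_of G m hba hsa hsb hab (Or.inl rfl)
  · exact notBad_of G m hba hsa hsb hab hp

end Aux

/-- Once a matched vertex `u` has made a move, the first part of the guard
of its `Update` rule never holds again. -/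
theorem stmt16 {V : Type*} [Fintype V] [LinearOrder V]
    (G : SimpleGraph V) (m : V → Option V) (hm : MaxMatchingOn G m)
    (E : MMExecution G m) (u : V) (hu : m u ≠ none) (j : ℕ)
    (h : ∃ i, i < j ∧ u ∈ E.act i) :
    ¬ guardUpdateA G m (E.cfg j) u := by
  have key : ∀ k, (∃ i, i < k ∧ u ∈ E.act i) → ¬ locBad G m u ((E.cfg k).loc u) := by
    intro k
    induction k with
    | zero => rintro ⟨i, hi, -⟩; omega
    | succ k ih =>
      rintro ⟨i, hi, hact⟩
      by_cases hk : u ∈ E.act k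
      · rcases E.valid k with hs | ⟨he, -, -⟩
        · rw [hs.2.2.1 u hk]; exact localNext_notBad G m _ u hu
        · rw [he] at hk; exact absurd hk (Set.notMem_empty u)
      · have hik : i < k := by
          rcases Nat.lt_succ_iff_lt_or_eq.mp hi with h' | h'
          · exact h'
          · subst h'; exact absurd hact hk
        have hold := ih ⟨i, hik, hact⟩
        rcases E.valid k with hs | ⟨-, -, hc⟩
        · rw [hs.2.2.2 u hk]; exact hold
        · rw [hc]; exact hold
  intro hbad
  exact key j h ((guardUpdateA_iff_locBad G m _ u).mp hbad)
end
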